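/- Let n ≥ 3, let Ω ⊆ ℝⁿ be open, let C₁,…,C_{n−2}, H : Ω → ℝ be C² functions, let ν : Ω → ℝ be a nowhere-vanishing C¹ function, let X = ν·V where V is the Nambu vector field associated to C₁,…,C_{n−2}, H, and set Φ = (1/ν, C₁/ν, …, C_{n−2}/ν, H/ν). If x : I → Ω is a C¹ solution of the differential equation x′(t) = X(x(t)) on an interval I and t₀ ∈ I, then for all t ∈ I, Φ(x(t)) = exp(−∫_{t₀}^{t} div X(x(τ)) dτ) · Φ(x(t₀)). -/

import Mathlib

/-- Jacobian determinant `∂(f₁,…,fₙ)/∂(x₁,…,xₙ)(x)` of a family of `n` scalar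
functions on `ℝⁿ`: the determinant of the matrix with `(i,j)` entry `∂fᵢ/∂xⱼ(x)`. -/
noncomputable def jacDet (n : ℕ) (f : Fin n → (Fin n → ℝ) → ℝ) (x : Fin n → ℝ) : ℝ :=
  (Matrix.of fun i j => fderiv ℝ (f i) x (Pi.single j 1)).det

/-- The Nambu vector field associated to `C₁,…,C_{n−2}, H`:
`Vᵢ(x) = ∂(C₁,…,C_{n−2}, πᵢ, H)/∂(x₁,…,xₙ)(x)`. -/
noncomputable def nambuVF (n : ℕ) (C : Fin (n - 2) → (Fin n → ℝ) → ℝ)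
    (H : (Fin n → ℝ) → ℝ) (x : Fin n → ℝ) (i : Fin n) : ℝ :=
  jacDet n (fun k => if hk : (k : ℕ) < n - 2 then C ⟨k, hk⟩
    else if (k : ℕ) = n - 2 then (fun y => y i) else H) x

/-- The divergence of a vector field: `div X(x) = trace (DX(x))`. -/
noncomputable def divergence (n : ℕ) (X : (Fin n → ℝ) → (Fin n → ℝ))
    (x : Fin n → ℝ) : ℝ :=
  LinearMap.trace ℝ (Fin n → ℝ) (fderiv ℝ X x).toLinearMap

/-- The map `Φ = (1/ν, C₁/ν, …, C_{n−2}/ν, H/ν) : ℝⁿ → ℝⁿ`. -/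
noncomputable def phiMap (n : ℕ) (C : Fin (n - 2) → (Fin n → ℝ) → ℝ)
    (H ν : (Fin n → ℝ) → ℝ) (x : Fin n → ℝ) (k : Fin n) : ℝ :=
  (if (k : ℕ) = 0 then 1
    else if hk : (k : ℕ) - 1 < n - 2 then C ⟨(k : ℕ) - 1, hk⟩ x else H x) / ν x

/-! `V` is column `r = n − 2` of the adjugate of the Jacobian matrix `J` of
`(C₁, …, C_{n−2}, ∗, H)`, whatever sits in row `r`. Hence `J V = det J · e_r`: the `Cⱼ` and `H`
are first integrals of `V`, and so of `X = ν V`. Moreover `div V = 0` (Piola's identity):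
differentiating the cofactors row by row, each row `k ≠ r` contributes the Hessian of the `k`-th
function, a symmetric matrix, contracted against a determinant that is antisymmetric in rows `k`
and `r`. Hence `div X = ∇ν · V`, so `(ν ∘ x)' = (ν ∘ x) · (div X ∘ x)`, which integrates to
`ν(x(t₀)) / ν(x(t)) = exp(−∫ div X)`; dividing the conserved `1, Cⱼ, H` by `ν` gives the claim. -/

open Matrix

theorem det_updateRow_sum_smul {ι R : Type*} [Fintype ι] [DecidableEq ι] [CommRing R]
    (N : Matrix ι ι R) (k : ι) (c : ι → R) (w : ι → ι → R) :
    (N.updateRow k (∑ j, c j • w j)).det = ∑ j, c j * (N.updateRow k (w j)).det := by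
  have h := map_sum (detRowAlternating.toMultilinearMap.toLinearMap N k) (fun j => c j • w j)
    Finset.univ
  simp only [map_smul, smul_eq_mul] at h
  exact h

theorem sum_mul_eq_zero_of_symm_of_antisymm {ι : Type*} [Fintype ι] (S T : ι → ι → ℝ)
    (hS : ∀ i j, S i j = S j i) (hT : ∀ i j, T i j = -T j i) :
    ∑ i, ∑ j, S i j * T i j = 0 := by
  have h : ∑ i, ∑ j, S i j * T i j = -∑ i, ∑ j, S i j * T i j := by
    conv_lhs => rw [Finset.sum_comm]
    rw [← Finset.sum_neg_distrib]
    refine Finset.sum_congr rfl fun i _ => ?_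
    rw [← Finset.sum_neg_distrib]
    refine Finset.sum_congr rfl fun j _ => ?_
    rw [hS j i, hT j i, mul_neg]
  linarith

theorem det_updateRow_updateRow_swap {ι R : Type*} [Fintype ι] [DecidableEq ι] [CommRing R]
    (M : Matrix ι ι R) {k r : ι} (hkr : k ≠ r) (u v : ι → R) :
    ((M.updateRow r u).updateRow k v).det = -((M.updateRow r v).updateRow k u).det := by
  have hswap : (M.updateRow r u).updateRow k v
      = ((M.updateRow r v).updateRow k u).submatrix (Equiv.swap r k) id := by
    ext i j
    rcases eq_or_ne i k with rfl | hik
    · simp [updateRow_apply, hkr.symm]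
    rcases eq_or_ne i r with rfl | hir
    · simp [updateRow_apply, hik]
    · simp [updateRow_apply, hik, hir, Equiv.swap_apply_of_ne_of_ne hir hik]
  rw [hswap, det_permute, Equiv.Perm.sign_swap hkr.symm]
  simp

theorem sum_det_updateRow_single_updateRow_eq_zero {ι : Type*} [Fintype ι] [DecidableEq ι]
    (M : Matrix ι ι ℝ) {k r : ι} (hkr : k ≠ r) (S : ι → ι → ℝ) (hS : ∀ i j, S i j = S j i) :
    ∑ i, ((M.updateRow r (Pi.single i 1)).updateRow k (S i)).det = 0 := by
  have hexpand : ∀ i, ((M.updateRow r (Pi.single i 1)).updateRow k (S i)).det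
      = ∑ j, S i j * ((M.updateRow r (Pi.single i 1)).updateRow k (Pi.single j 1)).det := by
    intro i
    conv_lhs => rw [pi_eq_sum_univ' (S i)]
    exact det_updateRow_sum_smul _ _ _ _
  rw [Finset.sum_congr rfl fun i _ => hexpand i]
  exact sum_mul_eq_zero_of_symm_of_antisymm S _ hS fun i j =>
    det_updateRow_updateRow_swap M hkr _ _

section DetDerivative

variable {ι 𝕜 E : Type*} [Fintype ι] [DecidableEq ι] [NontriviallyNormedField 𝕜]
  [NormedAddCommGroup E] [NormedSpace 𝕜 E]

variable (ι 𝕜) in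
noncomputable def detRowMultilinear : ContinuousMultilinearMap 𝕜 (fun _ : ι => ι → 𝕜) 𝕜 :=
  ⟨detRowAlternating.toMultilinearMap, continuous_id.matrix_det⟩

theorem hasFDerivAt_det_of_rows {R : E → ι → ι → 𝕜} {R' : E →L[𝕜] ι → ι → 𝕜} {x : E}
    (hR : HasFDerivAt R R' x) :
    HasFDerivAt (fun y => (of (R y)).det) ((detRowMultilinear ι 𝕜).linearDeriv (R x) ∘L R') x :=
  (detRowMultilinear ι 𝕜).hasFDerivAt (R x) |>.comp x hR

theorem detRowMultilinear_linearDeriv_apply (M v : ι → ι → 𝕜) :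
    (detRowMultilinear ι 𝕜).linearDeriv M v = ∑ k, (of (Function.update M k (v k))).det := by
  rw [ContinuousMultilinearMap.linearDeriv_apply]
  rfl

end DetDerivative

theorem divergence_eq_sum {n : ℕ} (X : (Fin n → ℝ) → Fin n → ℝ) (x : Fin n → ℝ) :
    divergence n X x = ∑ i, fderiv ℝ X x (Pi.single i 1) i := by
  rw [divergence, LinearMap.trace_eq_matrix_trace ℝ (Pi.basisFun ℝ (Fin n))]
  simp [Matrix.trace]

theorem divergence_smul {n : ℕ} {ν : (Fin n → ℝ) → ℝ} {V : (Fin n → ℝ) → Fin n → ℝ}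
    {x : Fin n → ℝ} (hν : DifferentiableAt ℝ ν x) (hV : DifferentiableAt ℝ V x) :
    divergence n (fun y => ν y • V y) x = ν x * divergence n V x + fderiv ℝ ν x (V x) := by
  rw [divergence, fderiv_fun_smul hν hV, ContinuousLinearMap.toLinearMap_add, map_add,
    ContinuousLinearMap.toLinearMap_smul, map_smul]
  simp [divergence, LinearMap.trace_smulRight]

theorem ContDiffAt.differentiableAt_fderiv {E F : Type*} [NormedAddCommGroup E]
    [NormedSpace ℝ E] [NormedAddCommGroup F] [NormedSpace ℝ F] {f : E → F} {x : E}
    (hf : ContDiffAt ℝ 2 f x) : DifferentiableAt ℝ (fderiv ℝ f) x :=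
  (hf.fderiv_right (m := 1) (by norm_num)).differentiableAt one_ne_zero

theorem hasFDerivAt_fderiv_apply_single {n : ℕ} {f : (Fin n → ℝ) → ℝ} {x : Fin n → ℝ}
    (hf : DifferentiableAt ℝ (fderiv ℝ f) x) :
    HasFDerivAt (fun y j => fderiv ℝ f y (Pi.single j 1))
      (ContinuousLinearMap.pi fun j => (fderiv ℝ (fderiv ℝ f) x).flip (Pi.single j 1)) x :=
  hasFDerivAt_pi.2 fun j => by
    simpa using hf.hasFDerivAt.clm_apply (hasFDerivAt_const (Pi.single j (1 : ℝ)) x)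

noncomputable def jacobianMatrix {n : ℕ} (g : Fin n → (Fin n → ℝ) → ℝ) (x : Fin n → ℝ) :
    Matrix (Fin n) (Fin n) ℝ :=
  Matrix.of fun k j => fderiv ℝ (g k) x (Pi.single j 1)

theorem hasFDerivAt_adjugate_jacobianMatrix {n : ℕ} {g : Fin n → (Fin n → ℝ) → ℝ}
    {x : Fin n → ℝ} (hg : ∀ k, DifferentiableAt ℝ (fderiv ℝ (g k)) x) (i r : Fin n) :
    HasFDerivAt (fun y => (jacobianMatrix g y).adjugate i r)
      ((detRowMultilinear (Fin n) ℝ).linearDeriv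
          (Function.update (jacobianMatrix g x) r (Pi.single i 1)) ∘L
        ContinuousLinearMap.pi (Function.update (fun k => ContinuousLinearMap.pi fun j =>
          (fderiv ℝ (fderiv ℝ (g k)) x).flip (Pi.single j 1)) r 0)) x := by
  simp only [adjugate_apply]
  refine hasFDerivAt_det_of_rows
    (R := fun y => Function.update (jacobianMatrix g y) r (Pi.single i 1)) (hasFDerivAt_pi.2 ?_)
  intro k
  rcases eq_or_ne k r with rfl | hk
  · rw [Function.update_self]
    exact (hasFDerivAt_const _ x).congr_of_eventuallyEq
      (.of_forall fun y => Function.update_self _ _ _)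
  · rw [Function.update_of_ne hk]
    exact (hasFDerivAt_fderiv_apply_single (hg k)).congr_of_eventuallyEq
      (.of_forall fun y => Function.update_of_ne hk _ _)

theorem divergence_adjugate_jacobianMatrix_eq_zero {n : ℕ} {g : Fin n → (Fin n → ℝ) → ℝ}
    {x : Fin n → ℝ} (hg : ∀ k, ContDiffAt ℝ 2 (g k) x) (r : Fin n) :
    divergence n (fun y i => (jacobianMatrix g y).adjugate i r) x = 0 := by
  rw [divergence_eq_sum, (hasFDerivAt_pi.2 fun i => hasFDerivAt_adjugate_jacobianMatrix
    (fun k => (hg k).differentiableAt_fderiv) i r).fderiv]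
  simp only [ContinuousLinearMap.pi_apply, ContinuousLinearMap.comp_apply,
    detRowMultilinear_linearDeriv_apply]
  rw [Finset.sum_comm]
  refine Finset.sum_eq_zero fun k _ => ?_
  rcases eq_or_ne k r with rfl | hk
  · exact Finset.sum_eq_zero fun i _ => det_eq_zero_of_row_eq_zero k fun j => by simp
  · simp only [Function.update_of_ne hk]
    exact sum_det_updateRow_single_updateRow_eq_zero (jacobianMatrix g x) hk
      (fun i j => fderiv ℝ (fderiv ℝ (g k)) x (Pi.single i 1) (Pi.single j 1))
      fun i j => (hg k).isSymmSndFDerivAt (by simp) _ _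

theorem jacobianMatrix_mulVec {n : ℕ} (g : Fin n → (Fin n → ℝ) → ℝ) (x v : Fin n → ℝ)
    (k : Fin n) : (jacobianMatrix g x *ᵥ v) k = fderiv ℝ (g k) x v := by
  conv_rhs => rw [pi_eq_sum_univ' v]
  simp [mulVec, dotProduct, jacobianMatrix, mul_comm]

theorem fderiv_apply_adjugate_jacobianMatrix_eq_zero {n : ℕ} (g : Fin n → (Fin n → ℝ) → ℝ)
    (x : Fin n → ℝ) {m r : Fin n} (hmr : m ≠ r) :
    fderiv ℝ (g m) x (fun i => (jacobianMatrix g x).adjugate i r) = 0 := by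
  rw [← jacobianMatrix_mulVec]
  have h := congr_fun (congr_fun (mul_adjugate (jacobianMatrix g x)) m) r
  simpa [mul_apply, mulVec, dotProduct, one_apply_ne hmr] using h

-- Row `n − 2` (here `H`) never matters: `nambuVF` replaces it by `πᵢ`.
noncomputable def nambuFamily {n : ℕ} (C : Fin (n - 2) → (Fin n → ℝ) → ℝ)
    (H : (Fin n → ℝ) → ℝ) (k : Fin n) : (Fin n → ℝ) → ℝ :=
  if hk : (k : ℕ) < n - 2 then C ⟨k, hk⟩ else H

theorem nambuVF_eq_adjugate {n : ℕ} (hn : 0 < n) (C : Fin (n - 2) → (Fin n → ℝ) → ℝ)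
    (H : (Fin n → ℝ) → ℝ) :
    nambuVF n C H =
      fun x i => (jacobianMatrix (nambuFamily C H) x).adjugate i ⟨n - 2, by omega⟩ := by
  funext x i
  rw [nambuVF, jacDet, adjugate_apply]
  congr 1
  ext k j
  rcases eq_or_ne k ⟨n - 2, by omega⟩ with rfl | hk
  · simp [(hasFDerivAt_apply i x).fderiv, Pi.single_apply, eq_comm]
  · have hk' : (k : ℕ) ≠ n - 2 := fun h => hk (Fin.ext h)
    simp [updateRow_ne hk, jacobianMatrix, nambuFamily, hk']

theorem contDiffAt_nambuFamily {n : ℕ} {C : Fin (n - 2) → (Fin n → ℝ) → ℝ}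
    {H : (Fin n → ℝ) → ℝ} {x : Fin n → ℝ} (hC : ∀ j, ContDiffAt ℝ 2 (C j) x)
    (hH : ContDiffAt ℝ 2 H x) (k : Fin n) : ContDiffAt ℝ 2 (nambuFamily C H k) x := by
  unfold nambuFamily
  split
  exacts [hC _, hH]

theorem differentiableAt_nambuVF {n : ℕ} (hn : 0 < n) {C : Fin (n - 2) → (Fin n → ℝ) → ℝ}
    {H : (Fin n → ℝ) → ℝ} {x : Fin n → ℝ} (hC : ∀ j, ContDiffAt ℝ 2 (C j) x)
    (hH : ContDiffAt ℝ 2 H x) : DifferentiableAt ℝ (nambuVF n C H) x := by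
  rw [nambuVF_eq_adjugate hn]
  exact differentiableAt_pi.2 fun i => (hasFDerivAt_adjugate_jacobianMatrix
    (fun k => (contDiffAt_nambuFamily hC hH k).differentiableAt_fderiv) i _).differentiableAt

theorem divergence_nambuVF {n : ℕ} (hn : 0 < n) {C : Fin (n - 2) → (Fin n → ℝ) → ℝ}
    {H : (Fin n → ℝ) → ℝ} {x : Fin n → ℝ} (hC : ∀ j, ContDiffAt ℝ 2 (C j) x)
    (hH : ContDiffAt ℝ 2 H x) : divergence n (nambuVF n C H) x = 0 := by
  rw [nambuVF_eq_adjugate hn]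
  exact divergence_adjugate_jacobianMatrix_eq_zero (contDiffAt_nambuFamily hC hH) _

theorem fderiv_casimir_apply_nambuVF {n : ℕ} (C : Fin (n - 2) → (Fin n → ℝ) → ℝ)
    (H : (Fin n → ℝ) → ℝ) (x : Fin n → ℝ) (j : Fin (n - 2)) :
    fderiv ℝ (C j) x (nambuVF n C H x) = 0 := by
  have hj := j.2
  have h := fderiv_apply_adjugate_jacobianMatrix_eq_zero (nambuFamily C H) x
    (m := ⟨j, by omega⟩) (r := ⟨n - 2, by omega⟩) (by simp [Fin.ext_iff]; omega)
  rw [nambuFamily, dif_pos hj] at h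
  rw [nambuVF_eq_adjugate (by omega)]
  exact h

theorem fderiv_hamiltonian_apply_nambuVF {n : ℕ} (hn : 2 ≤ n)
    (C : Fin (n - 2) → (Fin n → ℝ) → ℝ) (H : (Fin n → ℝ) → ℝ) (x : Fin n → ℝ) :
    fderiv ℝ H x (nambuVF n C H x) = 0 := by
  have h := fderiv_apply_adjugate_jacobianMatrix_eq_zero (nambuFamily C H) x
    (m := ⟨n - 1, by omega⟩) (r := ⟨n - 2, by omega⟩) (by simp [Fin.ext_iff]; omega)
  rw [nambuFamily, dif_neg (by simp; omega)] at h
  rw [nambuVF_eq_adjugate (by omega)]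
  exact h

theorem integral_eq_sub_of_hasDerivWithinAt_of_ordConnected {I : Set ℝ} (hI : I.OrdConnected)
    {f f' : ℝ → ℝ} (hf : ∀ s ∈ I, HasDerivWithinAt f (f' s) I s) (hf' : ContinuousOn f' I)
    {a b : ℝ} (ha : a ∈ I) (hb : b ∈ I) : ∫ s in a..b, f' s = f b - f a := by
  have hsub : Set.uIcc a b ⊆ I := hI.uIcc_subset ha hb
  refine intervalIntegral.integral_eq_sub_of_hasDeriv_right
    (fun s hs => (hf s (hsub hs)).continuousWithinAt.mono hsub) (fun s hs => ?_)
    (hf'.mono hsub).intervalIntegrable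
  have hI_nhds : I ∈ nhds s :=
    Filter.mem_of_superset (Ioo_mem_nhds hs.1 hs.2) (Set.Ioo_subset_Icc_self.trans hsub)
  exact ((hf s (mem_of_mem_nhds hI_nhds)).hasDerivAt hI_nhds).hasDerivWithinAt

theorem exp_integral_eq_div_of_hasDerivWithinAt {I : Set ℝ} (hI : I.OrdConnected)
    {u d : ℝ → ℝ} (hu : ∀ s ∈ I, HasDerivWithinAt u (u s * d s) I s)
    (hu0 : ∀ s ∈ I, u s ≠ 0) (hd : ContinuousOn d I) {a b : ℝ} (ha : a ∈ I) (hb : b ∈ I) :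
    Real.exp (∫ s in a..b, d s) = u b / u a := by
  have hlog : ∀ s ∈ I, HasDerivWithinAt (fun s => Real.log (u s)) (d s) I s := fun s hs => by
    simpa [mul_div_cancel_left₀ _ (hu0 s hs)] using (hu s hs).log (hu0 s hs)
  have hpos : 0 < u b / u a := by
    by_contra! h
    have hsub : Set.uIcc a b ⊆ I := hI.uIcc_subset ha hb
    have h0 : (0 : ℝ) ∈ Set.uIcc (u a) (u b) := by
      rcases div_nonpos_iff.mp h with h | h <;> simp [Set.mem_uIcc, h.1, h.2]
    obtain ⟨c, hc, hc0⟩ := intermediate_value_uIcc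
      (fun s hs => (hu s (hsub hs)).continuousWithinAt.mono hsub) h0
    exact hu0 c (hsub hc) hc0
  rw [integral_eq_sub_of_hasDerivWithinAt_of_ordConnected hI hlog hd ha hb, Real.exp_sub,
    Real.exp_log_eq_abs (hu0 b hb), Real.exp_log_eq_abs (hu0 a ha), ← abs_div, abs_of_pos hpos]

theorem apply_eq_apply_of_fderiv_apply_eq_zero {E : Type*} [NormedAddCommGroup E]
    [NormedSpace ℝ E] {X : E → E} {f : E → ℝ} {γ : ℝ → E} {I : Set ℝ} (hI : I.OrdConnected)
    (hγ : ∀ t ∈ I, HasDerivWithinAt γ (X (γ t)) I t) (hf : ∀ t ∈ I, DifferentiableAt ℝ f (γ t))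
    (hfX : ∀ t ∈ I, fderiv ℝ f (γ t) (X (γ t)) = 0) {a b : ℝ} (ha : a ∈ I) (hb : b ∈ I) :
    f (γ a) = f (γ b) := by
  have hderiv : ∀ t ∈ I, HasDerivWithinAt (f ∘ γ) 0 I t := fun t ht => by
    have h := (hf t ht).hasFDerivAt.comp_hasDerivWithinAt t (hγ t ht)
    rwa [hfX t ht] at h
  have h := Convex.norm_image_sub_le_of_norm_hasDerivWithin_le hderiv
    (fun _ _ => le_refl ‖(0 : ℝ)‖) hI.convex hb ha
  simpa [sub_eq_zero] using h

theorem divergence_smul_nambuVF {n : ℕ} (hn : 0 < n) {C : Fin (n - 2) → (Fin n → ℝ) → ℝ}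
    {H ν : (Fin n → ℝ) → ℝ} {x : Fin n → ℝ} (hC : ∀ j, ContDiffAt ℝ 2 (C j) x)
    (hH : ContDiffAt ℝ 2 H x) (hν : DifferentiableAt ℝ ν x) :
    divergence n (fun y => ν y • nambuVF n C H y) x = fderiv ℝ ν x (nambuVF n C H x) := by
  rw [divergence_smul hν (differentiableAt_nambuVF hn hC hH), divergence_nambuVF hn hC hH,
    mul_zero, zero_add]

theorem exp_neg_integral_divergence_smul_nambuVF {n : ℕ} (hn : 0 < n) {Ω : Set (Fin n → ℝ)}
    (hΩ : IsOpen Ω) {C : Fin (n - 2) → (Fin n → ℝ) → ℝ} {H ν : (Fin n → ℝ) → ℝ}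
    (hC : ∀ j, ContDiffOn ℝ 2 (C j) Ω) (hH : ContDiffOn ℝ 2 H Ω) (hν : ContDiffOn ℝ 1 ν Ω)
    (hν0 : ∀ x ∈ Ω, ν x ≠ 0) {I : Set ℝ} (hI : I.OrdConnected) {γ : ℝ → Fin n → ℝ}
    (hγΩ : ∀ t ∈ I, γ t ∈ Ω)
    (hγ : ∀ t ∈ I, HasDerivWithinAt γ (ν (γ t) • nambuVF n C H (γ t)) I t)
    {a b : ℝ} (ha : a ∈ I) (hb : b ∈ I) :
    Real.exp (-∫ τ in a..b, divergence n (fun y => ν y • nambuVF n C H y) (γ τ))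
      = ν (γ a) / ν (γ b) := by
  have hC2 : ∀ x ∈ Ω, ∀ j, ContDiffAt ℝ 2 (C j) x := fun x hx j =>
    (hC j).contDiffAt (hΩ.mem_nhds hx)
  have hH2 : ∀ x ∈ Ω, ContDiffAt ℝ 2 H x := fun x hx => hH.contDiffAt (hΩ.mem_nhds hx)
  have hνd : ∀ x ∈ Ω, DifferentiableAt ℝ ν x := fun x hx =>
    (hν.contDiffAt (hΩ.mem_nhds hx)).differentiableAt one_ne_zero
  have hdiv : ∀ x ∈ Ω, divergence n (fun y => ν y • nambuVF n C H y) x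
      = fderiv ℝ ν x (nambuVF n C H x) := fun x hx =>
    divergence_smul_nambuVF hn (hC2 x hx) (hH2 x hx) (hνd x hx)
  have hνγ : ∀ s ∈ I, HasDerivWithinAt (fun s => ν (γ s))
      (ν (γ s) * divergence n (fun y => ν y • nambuVF n C H y) (γ s)) I s := fun s hs => by
    have h := (hνd _ (hγΩ s hs)).hasFDerivAt.comp_hasDerivWithinAt s (hγ s hs)
    rwa [map_smul, smul_eq_mul, ← hdiv _ (hγΩ s hs)] at h
  have hdivγ : ContinuousOn
      (fun s => divergence n (fun y => ν y • nambuVF n C H y) (γ s)) I := by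
    have hV : ContinuousOn (nambuVF n C H) Ω := fun x hx =>
      (differentiableAt_nambuVF hn (hC2 x hx) (hH2 x hx)).continuousAt.continuousWithinAt
    refine ContinuousOn.comp (g := divergence n _) ?_
      (fun s hs => (hγ s hs).continuousWithinAt) hγΩ
    exact ((hν.continuousOn_fderiv_of_isOpen hΩ le_rfl).clm_apply hV).congr hdiv
  rw [Real.exp_neg, exp_integral_eq_div_of_hasDerivWithinAt hI hνγ
    (fun s hs => hν0 _ (hγΩ s hs)) hdivγ ha hb, inv_div]

theorem stmt_4 (n : ℕ) (hn : 3 ≤ n) (Ω : Set (Fin n → ℝ)) (hΩ : IsOpen Ω)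
    (C : Fin (n - 2) → (Fin n → ℝ) → ℝ) (H : (Fin n → ℝ) → ℝ)
    (hC : ∀ j, ContDiffOn ℝ 2 (C j) Ω) (hH : ContDiffOn ℝ 2 H Ω)
    (ν : (Fin n → ℝ) → ℝ) (hν : ContDiffOn ℝ 1 ν Ω) (hν0 : ∀ x ∈ Ω, ν x ≠ 0)
    -- `X = ν · V`, the rescaled Nambu vector field
    (X : (Fin n → ℝ) → (Fin n → ℝ)) (hX : ∀ x, X x = ν x • nambuVF n C H x)
    -- `γ : I → Ω` is a `C¹` solution of `x′(t) = X(x(t))` on an interval `I`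
    (I : Set ℝ) (hI : I.OrdConnected) (γ : ℝ → (Fin n → ℝ))
    (hγΩ : ∀ t ∈ I, γ t ∈ Ω)
    (hode : ∀ t ∈ I, HasDerivWithinAt γ (X (γ t)) I t)
    (t₀ : ℝ) (ht₀ : t₀ ∈ I) :
    ∀ t ∈ I, phiMap n C H ν (γ t)
      = Real.exp (-∫ τ in t₀..t, divergence n X (γ τ)) • phiMap n C H ν (γ t₀) := by
  intro t ht
  obtain rfl : X = fun x => ν x • nambuVF n C H x := funext hX
  beta_reduce at hode
  have hconserved : ∀ f : (Fin n → ℝ) → ℝ, (∀ x ∈ Ω, ContDiffAt ℝ 2 f x) →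
      (∀ x, fderiv ℝ f x (nambuVF n C H x) = 0) → f (γ t) = f (γ t₀) := fun f hf hfV =>
    apply_eq_apply_of_fderiv_apply_eq_zero (X := fun x => ν x • nambuVF n C H x) hI hode
      (fun s hs => (hf _ (hγΩ s hs)).differentiableAt (by norm_num))
      (fun s _ => by rw [map_smul, hfV, smul_zero]) ht ht₀
  have hCγ : ∀ j, C j (γ t) = C j (γ t₀) := fun j =>
    hconserved _ (fun x hx => (hC j).contDiffAt (hΩ.mem_nhds hx))
      (fderiv_casimir_apply_nambuVF C H · j)
  have hHγ : H (γ t) = H (γ t₀) :=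
    hconserved _ (fun x hx => hH.contDiffAt (hΩ.mem_nhds hx))
      (fderiv_hamiltonian_apply_nambuVF (by omega) C H)
  funext k
  rw [exp_neg_integral_divergence_smul_nambuVF (by omega) hΩ hC hH hν hν0 hI hγΩ hode ht₀ ht]
  simp only [phiMap, Pi.smul_apply, smul_eq_mul, hCγ, hHγ]
  field_simp [hν0 _ (hγΩ t ht), hν0 _ (hγΩ t₀ ht₀)]
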